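/- arXiv:1511.04815 — 2 statements merged into one kernel-verified Lean document; each statement's English description precedes it below -/
import Mathlib

section
/- Let λ > 0 and f(x) = ‖x‖₂ (the Euclidean norm on ℝ^n). Then for every v ∈ ℝ^n, the unique minimizer of λ‖x‖₂ + (1/2)‖x − v‖₂² is given by group soft thresholding: x = (1 − λ/‖v‖₂) v if ‖v‖₂ > λ, and x = 0 if ‖v‖₂ ≤ λ. -/
local notation "⟪" x ", " y "⟫_ℝ" => @inner ℝ _ _ x y

/-- Proximal operator of the Euclidean norm (group soft thresholding):
the unique minimizer of `λ‖x‖₂ + (1/2)‖x − v‖₂²` is `(1 − λ/‖v‖₂) v` if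
`‖v‖₂ > λ` and `0` otherwise. -/
theorem prox_l2_norm (n : ℕ) (v : EuclideanSpace ℝ (Fin n)) (lam : ℝ)
    (hlam : 0 < lam) :
    ∀ x : EuclideanSpace ℝ (Fin n),
      x ≠ (if lam < ‖v‖ then (1 - lam / ‖v‖) • v else 0) →
      lam * ‖if lam < ‖v‖ then (1 - lam / ‖v‖) • v else 0‖ +
        1 / 2 * ‖(if lam < ‖v‖ then (1 - lam / ‖v‖) • v else 0) - v‖ ^ 2 <
      lam * ‖x‖ + 1 / 2 * ‖x - v‖ ^ 2 := by
  intro x hx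
  have hcauchy : ⟪x, v⟫_ℝ ≤ ‖x‖ * ‖v‖ := real_inner_le_norm x v
  have hexp : ‖x - v‖ ^ 2 = ‖x‖ ^ 2 - 2 * ⟪x, v⟫_ℝ + ‖v‖ ^ 2 :=
    norm_sub_sq_real x v
  by_cases h : lam < ‖v‖
  · rw [if_pos h] at hx ⊢
    have hv : (0:ℝ) < ‖v‖ := hlam.trans h
    set c : ℝ := 1 - lam / ‖v‖ with hc
    have hc0 : 0 < c := by
      have : lam / ‖v‖ < 1 := (div_lt_one hv).mpr h
      simp [hc]; linarith
    have hnorm : ‖c • v‖ = ‖v‖ - lam := by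
      rw [norm_smul, Real.norm_eq_abs, abs_of_pos hc0, hc]
      field_simp
    have hinner : ⟪(c • v : EuclideanSpace ℝ (Fin n)), v⟫_ℝ = c * ‖v‖ ^ 2 := by
      rw [real_inner_smul_left, real_inner_self_eq_norm_sq]
    have hcv : c * ‖v‖ ^ 2 = (‖v‖ - lam) * ‖v‖ := by
      rw [hc]; field_simp
    have hexp' : ‖c • v - v‖ ^ 2 = ‖c • v‖ ^ 2 - 2 * ⟪(c • v : EuclideanSpace ℝ (Fin n)), v⟫_ℝ + ‖v‖ ^ 2 :=
      norm_sub_sq_real _ v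
    by_contra hle
    push_neg at hle
    rw [hexp, hexp', hnorm, hinner, hcv] at hle
    have hxn : 0 ≤ ‖x‖ := norm_nonneg x
    have h1 : ⟪x, v⟫_ℝ = ‖x‖ * ‖v‖ := by
      nlinarith [sq_nonneg (‖x‖ - (‖v‖ - lam))]
    have h2 : ‖x‖ = ‖v‖ - lam := by
      nlinarith [sq_nonneg (‖x‖ - (‖v‖ - lam))]
    have h3 : ‖v‖ • x = ‖x‖ • v := inner_eq_norm_mul_iff_real.mp h1
    apply hx
    have : x = (‖x‖ / ‖v‖) • v := by
      have := congrArg (fun y => (‖v‖)⁻¹ • y) h3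
      simpa [smul_smul, inv_mul_cancel₀ hv.ne', div_eq_inv_mul, mul_comm] using this
    rw [this, h2, hc]
    congr 1
    field_simp
  · rw [if_neg h] at hx ⊢
    push_neg at h
    have hx0 : 0 < ‖x‖ := by
      rw [norm_pos_iff]; exact hx
    have : ⟪x, v⟫_ℝ ≤ lam * ‖x‖ := by
      calc ⟪x, v⟫_ℝ ≤ ‖x‖ * ‖v‖ := hcauchy
        _ ≤ ‖x‖ * lam := by nlinarith
        _ = lam * ‖x‖ := mul_comm _ _
    rw [hexp]
    simp only [norm_zero, zero_sub, norm_neg, mul_zero]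
    nlinarith [sq_nonneg ‖x‖]
end

section
/- Let X be an n×n real symmetric matrix with spectral decomposition X = U Λ Uᵀ, where U is orthogonal and Λ = diag(λ_1, ..., λ_n). Then the unique minimizer of ‖Y − X‖_F over all n×n symmetric positive semidefinite matrices Y is Y = U Λ₊ Uᵀ, where Λ₊ = diag(max{λ_1, 0}, ..., max{λ_n, 0}); that is, the Euclidean (Frobenius-norm) projection onto the positive semidefinite cone is obtained by positive thresholding of the eigenvalues. -/
/-!
Conjugating by `U` is an isometry for the Frobenius norm, so everything reduces to
`Λ = diagonal lam`. There `Λ₊` satisfies the Pythagorean inequality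
`‖Z - Λ₊‖² + ‖Λ₊ - Λ‖² ≤ ‖Z - Λ‖²` for every positive semidefinite `Z`: off the
diagonal `Λ₊ - Λ` vanishes, and on it this is the projection inequality for `[0, ∞)`
applied to the nonnegative diagonal entries of `Z`. Hence any other `Z` is strictly
farther from `Λ`.
-/

open Matrix

noncomputable def frobNorm {n : ℕ} (M : Matrix (Fin n) (Fin n) ℝ) : ℝ :=
  Real.sqrt (∑ i, ∑ j, (M i j) ^ 2)

lemma sq_sub_max_zero_add_sq_le {z : ℝ} (hz : 0 ≤ z) (l : ℝ) :
    (z - max l 0) ^ 2 + (max l 0 - l) ^ 2 ≤ (z - l) ^ 2 := by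
  rcases le_total 0 l with hl | hl
  · simp [max_eq_left hl]
  · rw [max_eq_right hl]
    nlinarith

lemma Matrix.sum_sq_entries_eq_trace {n : Type*} [Fintype n] (M : Matrix n n ℝ) :
    ∑ i, ∑ j, M i j ^ 2 = (Mᵀ * M).trace := by
  simp only [trace, diag_apply, mul_apply, transpose_apply, sq]
  exact Finset.sum_comm

section frobNorm

variable {n : ℕ}

lemma frobNorm_sq (M : Matrix (Fin n) (Fin n) ℝ) : frobNorm M ^ 2 = ∑ i, ∑ j, M i j ^ 2 :=
  Real.sq_sqrt (by positivity)

lemma frobNorm_pos {M : Matrix (Fin n) (Fin n) ℝ} (hM : M ≠ 0) : 0 < frobNorm M := by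
  obtain ⟨i, j, hij⟩ : ∃ i j, M i j ≠ 0 := by
    by_contra! h
    exact hM (ext h)
  have hsum : 0 < ∑ i, ∑ j, M i j ^ 2 :=
    Finset.sum_pos' (fun _ _ => by positivity)
      ⟨i, Finset.mem_univ _, Finset.sum_pos' (fun _ _ => by positivity)
        ⟨j, Finset.mem_univ _, by positivity⟩⟩
  exact Real.sqrt_pos.mpr hsum

lemma frobNorm_conj_orthogonal {U : Matrix (Fin n) (Fin n) ℝ} (hU : Uᵀ * U = 1)
    (A : Matrix (Fin n) (Fin n) ℝ) : frobNorm (U * A * Uᵀ) = frobNorm A := by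
  have hgram : (U * A * Uᵀ)ᵀ * (U * A * Uᵀ) = U * (Aᵀ * A) * Uᵀ := by
    simp only [transpose_mul, transpose_transpose, Matrix.mul_assoc]
    rw [← Matrix.mul_assoc Uᵀ U, hU, Matrix.one_mul]
  unfold frobNorm
  rw [sum_sq_entries_eq_trace, sum_sq_entries_eq_trace, hgram, trace_mul_cycle,
    ← Matrix.mul_assoc, hU, Matrix.one_mul]

lemma frobNorm_sq_add_le_of_diag_nonneg {Z : Matrix (Fin n) (Fin n) ℝ} (hZ : ∀ i, 0 ≤ Z i i)
    (lam : Fin n → ℝ) :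
    frobNorm (Z - diagonal (fun i => max (lam i) 0)) ^ 2 +
        frobNorm (diagonal (fun i => max (lam i) 0) - diagonal lam) ^ 2 ≤
      frobNorm (Z - diagonal lam) ^ 2 := by
  simp only [frobNorm_sq, ← Finset.sum_add_distrib]
  refine Finset.sum_le_sum fun i _ => Finset.sum_le_sum fun j _ => ?_
  rcases eq_or_ne i j with rfl | hij
  · simpa using sq_sub_max_zero_add_sq_le (hZ i) (lam i)
  · simp [hij]

end frobNorm

/-- Projection onto the positive semidefinite cone by positive thresholding of
the eigenvalues: if `X = U Λ Uᵀ` with `U` orthogonal and `Λ` diagonal, then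
`Y₀ = U Λ₊ Uᵀ` (with `Λ₊` the positive part of `Λ`) is the unique minimizer
of `‖Y − X‖_F` over positive semidefinite matrices `Y`. -/
theorem psd_projection_eigenvalue_thresholding (n : ℕ)
    (X U : Matrix (Fin n) (Fin n) ℝ) (lam : Fin n → ℝ)
    (hU : U * Uᵀ = 1) (hU' : Uᵀ * U = 1)
    (hX : X = U * Matrix.diagonal lam * Uᵀ) :
    (U * Matrix.diagonal (fun i => max (lam i) 0) * Uᵀ).PosSemidef ∧
    ∀ Y : Matrix (Fin n) (Fin n) ℝ, Y.PosSemidef →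
      Y ≠ U * Matrix.diagonal (fun i => max (lam i) 0) * Uᵀ →
      frobNorm (U * Matrix.diagonal (fun i => max (lam i) 0) * Uᵀ - X) <
      frobNorm (Y - X) := by
  set lamPos := diagonal fun i => max (lam i) 0
  have hUT : Uᴴ = Uᵀ := conjTranspose_eq_transpose_of_trivial U
  have conj_sub (A B : Matrix (Fin n) (Fin n) ℝ) :
      U * A * Uᵀ - U * B * Uᵀ = U * (A - B) * Uᵀ := by
    rw [Matrix.mul_sub, Matrix.sub_mul]
  have hlamPos : lamPos.PosSemidef := posSemidef_diagonal_iff.mpr fun i => le_max_right _ _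
  refine ⟨hUT ▸ hlamPos.mul_mul_conjTranspose_same U, fun Y hY hne => ?_⟩
  set Z := Uᵀ * Y * U
  have hYZ : Y = U * Z * Uᵀ := by
    simp only [Z, ← Matrix.mul_assoc, hU, Matrix.one_mul]
    rw [Matrix.mul_assoc, hU, Matrix.mul_one]
  have hZ : Z.PosSemidef := by simpa only [hUT] using hY.conjTranspose_mul_mul_same U
  have hgap : 0 < frobNorm (Z - lamPos) := frobNorm_pos (sub_ne_zero.mpr fun h => hne (h ▸ hYZ))
  have hpyth := frobNorm_sq_add_le_of_diag_nonneg (fun i => hZ.diag_nonneg) lam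
  rw [hX, conj_sub, hYZ, conj_sub, frobNorm_conj_orthogonal hU', frobNorm_conj_orthogonal hU']
  refine lt_of_pow_lt_pow_left₀ 2 (Real.sqrt_nonneg _) ?_
  linarith [pow_pos hgap 2]
end
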